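/- Let n ≥ 1 be an integer, γ a real number with n > γ + 1, let s₁, s₂, σ₂ > 0, ρ ∈ (−1,1), and r ∈ (−1,1). Then ∫₀^∞ σ₁^{γ−n} exp( −(n s₁²/(2(1−ρ²))) σ₁^{−2} + (n s₁ s₂ r ρ/((1−ρ²) σ₂)) σ₁^{−1} ) dσ₁ = 2^{(n−γ−3)/2} ((1−ρ²)/(n s₁²))^{(n−γ−1)/2} [ Γ((n−γ−1)/2) ₁F₁((n−γ−1)/2; 1/2; n s₂² (rρ)²/(2(1−ρ²) σ₂²)) + rρ (2n s₂²/(1−ρ²))^{1/2} σ₂^{−1} Γ((n−γ)/2) ₁F₁((n−γ)/2; 3/2; n s₂² (rρ)²/(2(1−ρ²) σ₂²)) ]. -/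

import Mathlib

open MeasureTheory Real Set

/-- Pochhammer symbol (rising factorial) `(x)_m`. -/
noncomputable def poch (x : ℝ) (m : ℕ) : ℝ := (ascPochhammer ℝ m).eval x

/-- Confluent hypergeometric function `₁F₁(a; c; z)`. -/
noncomputable def oneF1 (a c z : ℝ) : ℝ :=
  ∑' m : ℕ, poch a m / (poch c m * (m.factorial : ℝ)) * z ^ m

/-- Gauss hypergeometric function `₂F₁(a, b; c; z)`. -/
noncomputable def twoF1 (a b c z : ℝ) : ℝ :=
  ∑' m : ℕ, poch a m * poch b m / (poch c m * (m.factorial : ℝ)) * z ^ m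

/-- Generalized hypergeometric function `₃F₂(a₁, a₂, a₃; b₁, b₂; z)`. -/
noncomputable def threeF2 (a₁ a₂ a₃ b₁ b₂ z : ℝ) : ℝ :=
  ∑' m : ℕ, poch a₁ m * poch a₂ m * poch a₃ m /
      (poch b₁ m * poch b₂ m * (m.factorial : ℝ)) * z ^ m

/-- Beta function `B(u,v) = Γ(u)Γ(v)/Γ(u+v)`. -/
noncomputable def betaFn (u v : ℝ) : ℝ := Real.Gamma u * Real.Gamma v / Real.Gamma (u + v)

/-- `W_{γ,δ}(n)`, the ratio of Gamma functions from the paper. -/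
noncomputable def Wgd (γ δ : ℝ) (n : ℕ) : ℝ :=
  (Real.Gamma (((n : ℝ) - γ) / 2) * Real.Gamma (((n : ℝ) - δ) / 2)) /
    (Real.Gamma (((n : ℝ) - γ - 1) / 2) * Real.Gamma (((n : ℝ) - δ - 1) / 2))

section aux

lemma poch_zero (x : ℝ) : poch x 0 = 1 := by simp [poch]

lemma poch_succ (x : ℝ) (k : ℕ) : poch x (k + 1) = poch x k * (x + k) := by
  simp [poch, ascPochhammer_succ_right]

lemma gamma_poch {x : ℝ} (hx : 0 < x) (k : ℕ) :
    Real.Gamma (x + k) = Real.Gamma x * poch x k := by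
  induction k with
  | zero => simp [poch_zero]
  | succ k ih =>
    have hxk : (0:ℝ) < x + k := by positivity
    rw [show (x + ((k:ℕ)+1:ℕ) : ℝ) = (x + k) + 1 by push_cast; ring,
      Real.Gamma_add_one hxk.ne', ih, poch_succ]
    ring

lemma poch_half (k : ℕ) :
    ((2*k).factorial : ℝ) = poch (1/2) k * 4 ^ k * k.factorial := by
  induction k with
  | zero => simp [poch_zero]
  | succ k ih =>
    have h1 : ((2 * (k+1)).factorial : ℝ)
        = ((2*k).factorial : ℝ) * (2*k+1) * (2*k+1+1) := by
      rw [show 2 * (k+1) = (2*k) + 1 + 1 by ring, Nat.factorial_succ, Nat.factorial_succ]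
      push_cast; ring
    rw [h1, ih, poch_succ, Nat.factorial_succ]
    push_cast; ring

lemma poch_three_half (k : ℕ) :
    ((2*k+1).factorial : ℝ) = poch (3/2) k * 4 ^ k * k.factorial := by
  induction k with
  | zero => simp [poch_zero]
  | succ k ih =>
    have h1 : ((2 * (k+1) + 1).factorial : ℝ)
        = ((2*k+1).factorial : ℝ) * (2*k+1+1) * (2*k+1+1+1) := by
      rw [show 2 * (k+1) + 1 = (2*k+1) + 1 + 1 by ring, Nat.factorial_succ, Nat.factorial_succ]
      push_cast; ring
    rw [h1, ih, poch_succ, Nat.factorial_succ]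
    push_cast; ring

lemma poch_pos {x : ℝ} (hx : 0 < x) (k : ℕ) : 0 < poch x k := by
  induction k with
  | zero => simp [poch_zero]
  | succ k ih => rw [poch_succ]; positivity

lemma term_integrable {ν A : ℝ} (hν : 0 < ν) (hA : 0 < A) (C : ℝ) (m : ℕ) :
    IntegrableOn
      (fun t : ℝ => (t ^ (ν - 1) * Real.exp (-A * t ^ 2)) * ((C * t) ^ m / m.factorial))
      (Ioi 0) := by
  have hm : (0:ℝ) ≤ m := Nat.cast_nonneg m
  have hq : (-1:ℝ) < ν - 1 + m := by linarith
  have base := integrableOn_rpow_mul_exp_neg_mul_sq hA hq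
  refine IntegrableOn.congr_fun (base.const_mul (C ^ m / m.factorial))
    (fun t ht => ?_) measurableSet_Ioi
  have ht' : (0:ℝ) < t := ht
  rw [Real.rpow_add ht', Real.rpow_natCast, mul_pow]
  ring

lemma term_int {ν A : ℝ} (hν : 0 < ν) (hA : 0 < A) (C : ℝ) (m : ℕ) :
    ∫ t in Ioi (0:ℝ), (t ^ (ν - 1) * Real.exp (-A * t ^ 2)) * ((C * t) ^ m / m.factorial)
      = C ^ m / m.factorial * (A ^ (-(ν + m) / 2) * (1/2) * Real.Gamma ((ν + m) / 2)) := by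
  have hm : (0:ℝ) ≤ m := Nat.cast_nonneg m
  have hq : (-1:ℝ) < ν - 1 + m := by linarith
  have h1 : ∫ t in Ioi (0:ℝ),
      (t ^ (ν - 1) * Real.exp (-A * t ^ 2)) * ((C * t) ^ m / m.factorial)
      = ∫ t in Ioi (0:ℝ), (C ^ m / m.factorial) * (t ^ (ν - 1 + m) * Real.exp (-A * t ^ (2:ℝ))) := by
    refine setIntegral_congr_fun measurableSet_Ioi (fun t ht => ?_)
    have ht' : (0:ℝ) < t := ht
    rw [Real.rpow_add ht', Real.rpow_natCast, mul_pow, Real.rpow_two]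
    ring
  rw [h1, integral_const_mul,
    integral_rpow_mul_exp_neg_mul_rpow (by norm_num : (0:ℝ) < 2) hq hA]
  rw [show ν - 1 + m + 1 = ν + m by ring]

lemma key_tsum {ν A : ℝ} (hν : 0 < ν) (hA : 0 < A) (B : ℝ) :
    (∫ t in Ioi (0:ℝ), t ^ (ν - 1) * Real.exp (-A * t ^ 2 + B * t)) =
      ∑' m : ℕ, B ^ m / m.factorial * (A ^ (-(ν + m) / 2) * (1/2) * Real.Gamma ((ν + m) / 2)) ∧
    Summable (fun m : ℕ =>
      B ^ m / m.factorial * (A ^ (-(ν + m) / 2) * (1/2) * Real.Gamma ((ν + m) / 2))) := by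
  set F : ℕ → ℝ → ℝ :=
    fun m t => (t ^ (ν - 1) * Real.exp (-A * t ^ 2)) * ((B * t) ^ m / m.factorial) with hF
  have hFi : ∀ m, Integrable (F m) (volume.restrict (Ioi 0)) :=
    fun m => term_integrable hν hA B m
  -- norms
  have hnormfun : ∀ m : ℕ, ∀ t ∈ Ioi (0:ℝ), ‖F m t‖ =
      (t ^ (ν - 1) * Real.exp (-A * t ^ 2)) * ((|B| * t) ^ m / m.factorial) := by
    intro m t ht
    have ht' : (0:ℝ) < t := ht
    have h1 : (0:ℝ) ≤ t ^ (ν - 1) * Real.exp (-A * t ^ 2) := by positivity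
    rw [hF, Real.norm_eq_abs, abs_mul, abs_of_nonneg h1, abs_div, abs_pow, abs_mul,
      abs_of_pos ht', Nat.abs_cast]
  have hnorm : ∀ m : ℕ, (∫ t in Ioi (0:ℝ), ‖F m t‖)
      = |B| ^ m / m.factorial * (A ^ (-(ν + m) / 2) * (1/2) * Real.Gamma ((ν + m) / 2)) := by
    intro m
    rw [setIntegral_congr_fun measurableSet_Ioi (hnormfun m)]
    exact term_int hν hA |B| m
  -- dominating function
  have hdom : IntegrableOn
      (fun t : ℝ => t ^ (ν - 1) * Real.exp (-A * t ^ 2) * Real.exp (|B| * t)) (Ioi 0) := by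
    have hg : IntegrableOn
        (fun t : ℝ => Real.exp (B^2/(2*A)) * (t ^ (ν - 1) * Real.exp (-(A/2) * t ^ 2)))
        (Ioi 0) :=
      (integrableOn_rpow_mul_exp_neg_mul_sq (by positivity) (by linarith)).const_mul _
    refine Integrable.mono' hg ?_ ?_
    · apply Measurable.aestronglyMeasurable
      fun_prop
    · filter_upwards [ae_restrict_mem measurableSet_Ioi] with t ht
      have ht' : (0:ℝ) < t := ht
      have h1 : (0:ℝ) ≤ t ^ (ν - 1) := Real.rpow_nonneg ht'.le _
      rw [Real.norm_eq_abs, abs_of_nonneg (by positivity), mul_assoc, ← Real.exp_add,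
        show Real.exp (B^2/(2*A)) * (t ^ (ν - 1) * Real.exp (-(A/2) * t ^ 2))
          = t ^ (ν - 1) * Real.exp (B^2/(2*A) + -(A/2) * t ^ 2) by rw [Real.exp_add]; ring]
      refine mul_le_mul_of_nonneg_left (Real.exp_le_exp.2 ?_) h1
      rw [← sub_nonneg, show B^2/(2*A) + -(A/2) * t ^ 2 - (-A * t ^ 2 + |B| * t)
        = (A * t - |B|)^2 / (2*A) by field_simp; linear_combination (-1) * sq_abs B]
      positivity
  -- summability of integrals of norms
  have hsummable : Summable (fun m : ℕ => ∫ t in Ioi (0:ℝ), ‖F m t‖) := by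
    refine summable_of_sum_range_le (c := ∫ t in Ioi (0:ℝ),
        t ^ (ν - 1) * Real.exp (-A * t ^ 2) * Real.exp (|B| * t)) (fun m => ?_) (fun N => ?_)
    · exact integral_nonneg (fun t => norm_nonneg _)
    · have h1 : ∀ m : ℕ, (∫ t in Ioi (0:ℝ), ‖F m t‖)
          = ∫ t in Ioi (0:ℝ),
            (t ^ (ν - 1) * Real.exp (-A * t ^ 2)) * ((|B| * t) ^ m / m.factorial) :=
        fun m => setIntegral_congr_fun measurableSet_Ioi (hnormfun m)
      simp_rw [h1]
      rw [← integral_finset_sum _ (fun m _ => term_integrable hν hA |B| m)]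
      refine setIntegral_mono_on
        (integrable_finset_sum _ (fun m _ => term_integrable hν hA |B| m)) hdom
        measurableSet_Ioi (fun t ht => ?_)
      have ht' : (0:ℝ) < t := ht
      have h2 : (0:ℝ) ≤ t ^ (ν - 1) * Real.exp (-A * t ^ 2) := by positivity
      rw [← Finset.mul_sum]
      exact mul_le_mul_of_nonneg_left (Real.sum_le_exp_of_nonneg (by positivity) N) h2
  have hswap := MeasureTheory.integral_tsum_of_summable_integral_norm hFi hsummable
  have hpt : ∀ t : ℝ, (∑' m : ℕ, F m t) = t ^ (ν - 1) * Real.exp (-A * t ^ 2 + B * t) := by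
    intro t
    rw [hF]
    rw [tsum_mul_left]
    have : (∑' m : ℕ, (B * t) ^ m / m.factorial) = Real.exp (B * t) := by
      rw [Real.exp_eq_exp_ℝ, NormedSpace.exp_eq_tsum_div]
    rw [this, Real.exp_add, mul_assoc]
  have hsumF : Summable (fun m : ℕ => ∫ t in Ioi (0:ℝ), F m t) :=
    Summable.of_norm_bounded hsummable (fun m => norm_integral_le_integral_norm _)
  constructor
  · calc (∫ t in Ioi (0:ℝ), t ^ (ν - 1) * Real.exp (-A * t ^ 2 + B * t))
        = ∫ t in Ioi (0:ℝ), ∑' m : ℕ, F m t :=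
          setIntegral_congr_fun measurableSet_Ioi (fun t _ => (hpt t).symm)
      _ = ∑' m : ℕ, ∫ t in Ioi (0:ℝ), F m t := hswap.symm
      _ = _ := tsum_congr (fun m => term_int hν hA B m)
  · exact hsumF.congr (fun m => term_int hν hA B m)

end aux

lemma key {ν A : ℝ} (hν : 0 < ν) (hA : 0 < A) (B : ℝ) :
    ∫ t in Ioi (0:ℝ), t ^ (ν - 1) * Real.exp (-A * t ^ 2 + B * t) =
      A ^ (-ν/2) * (1/2) * Real.Gamma (ν/2) * oneF1 (ν/2) (1/2) (B^2/(4*A)) +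
      B * A ^ (-(ν+1)/2) * (1/2) * Real.Gamma ((ν+1)/2) * oneF1 ((ν+1)/2) (3/2) (B^2/(4*A)) := by
  obtain ⟨hval, hsum⟩ := key_tsum hν hA B
  set a : ℕ → ℝ := fun m =>
    B ^ m / m.factorial * (A ^ (-(ν + m) / 2) * (1/2) * Real.Gamma ((ν + m) / 2)) with ha
  rw [hval]
  have he : Summable (fun k => a (2 * k)) := hsum.comp_injective (fun x y h => by omega)
  have ho : Summable (fun k => a (2 * k + 1)) := hsum.comp_injective (fun x y h => by omega)
  rw [← tsum_even_add_odd he ho]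
  have hfac : ∀ k : ℕ, ((k.factorial : ℝ)) ≠ 0 := fun k => Nat.cast_ne_zero.2 k.factorial_ne_zero
  have hAk : ∀ k : ℕ, (A:ℝ) ^ k ≠ 0 := fun k => pow_ne_zero _ hA.ne'
  congr 1
  · rw [oneF1, ← tsum_mul_left]
    refine tsum_congr (fun k => ?_)
    have hph : poch (1/2) k ≠ 0 := (poch_pos one_half_pos k).ne'
    have e1 : Real.Gamma ((ν + ((2*k:ℕ):ℝ)) / 2) = Real.Gamma (ν/2) * poch (ν/2) k := by
      rw [show (ν + ((2*k:ℕ):ℝ)) / 2 = ν/2 + k by push_cast; ring]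
      exact gamma_poch (by positivity) k
    have e2 : A ^ (-(ν + ((2*k:ℕ):ℝ)) / 2) = A ^ (-ν/2) * (A ^ k)⁻¹ := by
      rw [show -(ν + ((2*k:ℕ):ℝ)) / 2 = -ν/2 + (-(k:ℝ)) by push_cast; ring,
        Real.rpow_add hA, Real.rpow_neg hA.le, Real.rpow_natCast]
    rw [ha]
    simp only
    rw [e1, e2, poch_half k, pow_mul, div_pow]
    field_simp
    ring
  · rw [oneF1, ← tsum_mul_left]
    refine tsum_congr (fun k => ?_)
    have hph : poch (3/2) k ≠ 0 := (poch_pos (by norm_num) k).ne'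
    have e1 : Real.Gamma ((ν + ((2*k+1:ℕ):ℝ)) / 2) = Real.Gamma ((ν+1)/2) * poch ((ν+1)/2) k := by
      rw [show (ν + ((2*k+1:ℕ):ℝ)) / 2 = (ν+1)/2 + k by push_cast; ring]
      exact gamma_poch (by positivity) k
    have e2 : A ^ (-(ν + ((2*k+1:ℕ):ℝ)) / 2) = A ^ (-(ν+1)/2) * (A ^ k)⁻¹ := by
      rw [show -(ν + ((2*k+1:ℕ):ℝ)) / 2 = -(ν+1)/2 + (-(k:ℝ)) by push_cast; ring,
        Real.rpow_add hA, Real.rpow_neg hA.le, Real.rpow_natCast]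
    rw [ha]
    simp only
    rw [e1, e2, poch_three_half k, pow_succ, pow_mul, div_pow]
    field_simp
    ring

lemma subst (ν A B : ℝ) :
    (∫ σ in Ioi (0:ℝ), σ ^ (-ν - 1) * Real.exp (-A / σ ^ 2 + B / σ)) =
      ∫ t in Ioi (0:ℝ), t ^ (ν - 1) * Real.exp (-A * t ^ 2 + B * t) := by
  rw [← integral_comp_rpow_Ioi (fun t => t ^ (ν - 1) * Real.exp (-A * t ^ 2 + B * t))
    (p := -1) (by norm_num)]
  refine setIntegral_congr_fun measurableSet_Ioi (fun σ hσ => ?_)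
  have hσ' : (0:ℝ) < σ := hσ
  have h1 : σ ^ ((-1:ℝ)) = σ⁻¹ := Real.rpow_neg_one σ
  have h2 : (σ⁻¹) ^ (ν - 1) = σ ^ (-(ν-1)) := by
    rw [← Real.rpow_neg_one σ, ← Real.rpow_mul hσ'.le]
    norm_num
  simp only [smul_eq_mul, h1]
  rw [h2, abs_neg, abs_one, one_mul, inv_pow σ 2]
  rw [show (-1:ℝ) - 1 = -2 by norm_num]
  rw [show σ ^ (-2:ℝ) * (σ ^ (-(ν-1)) * Real.exp (-A * (σ^2)⁻¹ + B * σ⁻¹))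
      = (σ ^ (-2:ℝ) * σ ^ (-(ν-1))) * Real.exp (-A * (σ^2)⁻¹ + B * σ⁻¹) from by ring,
    ← Real.rpow_add hσ', show (-2:ℝ) + -(ν-1) = -ν-1 from by ring]
  rw [div_eq_mul_inv, div_eq_mul_inv]

/-- Step (ii) of the main theorem: integrating `σ₁` out yields even and odd confluent
hypergeometric contributions. -/
theorem sigma1_integrated_out (n : ℕ) (hn : 1 ≤ n) (γ : ℝ) (hγ : γ + 1 < (n : ℝ))
    (s1 s2 σ2 : ℝ) (hs1 : 0 < s1) (hs2 : 0 < s2) (hσ2 : 0 < σ2)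
    (ρ : ℝ) (hρ : ρ ∈ Ioo (-1 : ℝ) 1) (r : ℝ) (hr : r ∈ Ioo (-1 : ℝ) 1) :
    (∫ σ1 in Ioi (0 : ℝ),
        σ1 ^ (γ - (n : ℝ)) *
          Real.exp (-((n : ℝ) * s1 ^ 2 / (2 * (1 - ρ ^ 2))) / σ1 ^ 2 +
            ((n : ℝ) * s1 * s2 * r * ρ / ((1 - ρ ^ 2) * σ2)) / σ1)) =
      (2 : ℝ) ^ (((n : ℝ) - γ - 3) / 2) *
        ((1 - ρ ^ 2) / ((n : ℝ) * s1 ^ 2)) ^ (((n : ℝ) - γ - 1) / 2) *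
        (Real.Gamma (((n : ℝ) - γ - 1) / 2) *
            oneF1 (((n : ℝ) - γ - 1) / 2) (1 / 2)
              ((n : ℝ) * s2 ^ 2 * (r * ρ) ^ 2 / (2 * (1 - ρ ^ 2) * σ2 ^ 2)) +
          r * ρ * (2 * (n : ℝ) * s2 ^ 2 / (1 - ρ ^ 2)) ^ ((1 : ℝ) / 2) * σ2⁻¹ *
            Real.Gamma (((n : ℝ) - γ) / 2) *
            oneF1 (((n : ℝ) - γ) / 2) (3 / 2)
              ((n : ℝ) * s2 ^ 2 * (r * ρ) ^ 2 / (2 * (1 - ρ ^ 2) * σ2 ^ 2))) := by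
  have hρ2 : (0:ℝ) < 1 - ρ ^ 2 := by nlinarith [hρ.1, hρ.2]
  have hn' : (0:ℝ) < n := by exact_mod_cast Nat.pos_of_ne_zero (by omega)
  set ν : ℝ := (n : ℝ) - γ - 1 with hν_def
  have hν : 0 < ν := by simp only [hν_def]; linarith
  set A : ℝ := (n : ℝ) * s1 ^ 2 / (2 * (1 - ρ ^ 2)) with hA_def
  set B : ℝ := (n : ℝ) * s1 * s2 * r * ρ / ((1 - ρ ^ 2) * σ2) with hB_def
  have hA : 0 < A := by rw [hA_def]; positivity
  set w : ℝ := (1 - ρ ^ 2) / ((n : ℝ) * s1 ^ 2) with hw_def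
  have hw : 0 < w := by rw [hw_def]; positivity
  set z : ℝ := (n : ℝ) * s2 ^ 2 * (r * ρ) ^ 2 / (2 * (1 - ρ ^ 2) * σ2 ^ 2) with hz_def
  have hz : B ^ 2 / (4 * A) = z := by
    rw [hB_def, hA_def, hz_def]
    field_simp
    ring
  have hsub : (∫ σ1 in Ioi (0 : ℝ),
      σ1 ^ (γ - (n : ℝ)) * Real.exp (-A / σ1 ^ 2 + B / σ1)) =
      ∫ t in Ioi (0:ℝ), t ^ (ν - 1) * Real.exp (-A * t ^ 2 + B * t) := by
    rw [← subst ν A B]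
    refine setIntegral_congr_fun measurableSet_Ioi (fun σ hσ => ?_)
    rw [show γ - (n:ℝ) = -ν - 1 by rw [hν_def]; ring]
  rw [hsub, key hν hA B, hz]
  have hAinv : A⁻¹ = 2 * w := by rw [hA_def, hw_def]; field_simp
  have hc1 : A ^ (-ν/2) * (1/2) = 2 ^ ((ν-2)/2) * w ^ (ν/2) := by
    rw [show -ν/2 = -(ν/2) by ring, Real.rpow_neg hA.le, ← Real.inv_rpow hA.le, hAinv,
      Real.mul_rpow (by norm_num) hw.le]
    rw [show (2:ℝ) ^ (ν/2) * w ^ (ν/2) * (1/2) = 2 ^ (ν/2) * (2:ℝ)⁻¹ * w ^ (ν/2) by ring,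
      ← Real.rpow_neg_one (2:ℝ), ← Real.rpow_add (by norm_num : (0:ℝ) < 2),
      show ν/2 + -1 = (ν-2)/2 by ring]
  have hBA : B * A ^ (-(1:ℝ)/2) =
      r * ρ * (2 * (n : ℝ) * s2 ^ 2 / (1 - ρ ^ 2)) ^ ((1 : ℝ) / 2) * σ2⁻¹ := by
    set C : ℝ := (n : ℝ) * s1 * s2 / ((1 - ρ ^ 2) * σ2) with hC_def
    have hC : 0 < C := by rw [hC_def]; positivity
    have hBC : B = r * ρ * C := by rw [hB_def, hC_def]; ring
    have h3 : A ^ (-(1:ℝ)/2) = Real.sqrt A⁻¹ := by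
      rw [show -(1:ℝ)/2 = -(1/2) by ring, Real.rpow_neg hA.le, ← Real.inv_rpow hA.le,
        Real.sqrt_eq_rpow]
    have h4 : (2 * (n : ℝ) * s2 ^ 2 / (1 - ρ ^ 2)) ^ ((1 : ℝ) / 2)
        = Real.sqrt (2 * (n : ℝ) * s2 ^ 2 / (1 - ρ ^ 2)) := (Real.sqrt_eq_rpow _).symm
    have hkey : C * Real.sqrt A⁻¹ = Real.sqrt (2 * (n : ℝ) * s2 ^ 2 / (1 - ρ ^ 2)) * σ2⁻¹ := by
      rw [show C * Real.sqrt A⁻¹ = Real.sqrt (C^2 * A⁻¹) by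
        rw [Real.sqrt_mul (by positivity), Real.sqrt_sq hC.le]]
      rw [show Real.sqrt (2 * (n : ℝ) * s2 ^ 2 / (1 - ρ ^ 2)) * σ2⁻¹
          = Real.sqrt (2 * (n : ℝ) * s2 ^ 2 / (1 - ρ ^ 2) * (σ2^2)⁻¹) by
        rw [Real.sqrt_mul (by positivity), Real.sqrt_inv, Real.sqrt_sq hσ2.le]]
      congr 1
      rw [hC_def, hAinv, hw_def]
      field_simp
    rw [hBC, h3, h4]
    linear_combination (r * ρ) * hkey
  have hc2 : B * A ^ (-(ν+1)/2) * (1/2) =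
      2 ^ ((ν-2)/2) * w ^ (ν/2) *
        (r * ρ * (2 * (n : ℝ) * s2 ^ 2 / (1 - ρ ^ 2)) ^ ((1 : ℝ) / 2) * σ2⁻¹) := by
    rw [show -(ν+1)/2 = -ν/2 + -(1:ℝ)/2 by ring, Real.rpow_add hA, ← hBA, ← hc1]
    ring
  rw [show ((n:ℝ) - γ - 1)/2 = ν/2 by rw [hν_def], show ((n:ℝ) - γ)/2 = (ν+1)/2 by
    rw [hν_def]; ring, show ((n:ℝ) - γ - 3)/2 = (ν-2)/2 by rw [hν_def]; ring]
  linear_combination Real.Gamma (ν/2) * oneF1 (ν/2) (1/2) z * hc1 +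
    Real.Gamma ((ν+1)/2) * oneF1 ((ν+1)/2) (3/2) z * hc2
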